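/- arXiv:1602.05033 — 3 statements merged into one kernel-verified Lean document; each statement's English description precedes it below -/
import Mathlib

section
/- Let T = QΛQᵀ be the eigendecomposition of symmetric negative definite T ∈ ℝ^{k×k} and let Y solve TY + YT + G = 0 with G symmetric positive semidefinite. Then for any matrix M ∈ ℝ^{k×s}, ‖Y M‖_F² = Σ_{i=1}^{k} ‖ e_iᵀ S D_i^{-1} W ‖₂², where S = QᵀGQ, W = QᵀM, and D_i = λ_i I + Λ. -/
open Matrix

theorem residual_frobenius_norm_formula
    {k s : Type*} [Fintype k] [Fintype s] [DecidableEq k]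
    (T Q G : Matrix k k ℝ) (lam : k → ℝ)
    (hQ : Qᵀ * Q = 1) (hT : T = Q * Matrix.diagonal lam * Qᵀ)
    (hlam : ∀ i, lam i < 0) (hG : G.PosSemidef)
    (Y : Matrix k k ℝ) (hY : T * Y + Y * T + G = 0) (M : Matrix k s ℝ) :
    ∑ i, ∑ j, ((Y * M) i j) ^ 2 =
      ∑ i, ∑ l,
        ((Qᵀ * G * Q * (lam i • (1 : Matrix k k ℝ) + Matrix.diagonal lam)⁻¹ * (Qᵀ * M)) i l) ^ 2 := by
  have hQQ : Q * Qᵀ = 1 := mul_eq_one_comm.mp hQ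
  have hQ' : ∀ X : Matrix k k ℝ, Qᵀ * (Q * X) = X := by
    intro X; rw [← Matrix.mul_assoc, hQ, Matrix.one_mul]
  set S : Matrix k k ℝ := Qᵀ * G * Q with hS
  set Yt : Matrix k k ℝ := Qᵀ * Y * Q with hYt
  have hne : ∀ i j, lam i + lam j ≠ 0 := fun i j =>
    ne_of_lt (add_neg (hlam i) (hlam j))
  -- transformed Lyapunov equation
  have hLyap : Matrix.diagonal lam * Yt + Yt * Matrix.diagonal lam + S = 0 := by
    have h := congrArg (fun A => Qᵀ * A * Q) hY
    simp only [hT, Matrix.mul_add, Matrix.add_mul, Matrix.mul_assoc, hQ', hQ,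
      Matrix.mul_one, Matrix.mul_zero, Matrix.zero_mul] at h
    rw [hYt, hS]
    simp only [Matrix.mul_assoc]
    exact h
  have hYte : ∀ i j, Yt i j = -S i j / (lam i + lam j) := by
    intro i j
    have h := congrFun (congrFun hLyap i) j
    simp only [Matrix.add_apply, Matrix.diagonal_mul, Matrix.mul_diagonal,
      Matrix.zero_apply] at h
    rw [eq_div_iff (hne i j)]
    ring_nf
    ring_nf at h
    linarith
  -- inverse of the shifted diagonal
  have hinv : ∀ i, (lam i • (1 : Matrix k k ℝ) + Matrix.diagonal lam)⁻¹
      = Matrix.diagonal (fun j => (lam i + lam j)⁻¹) := by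
    intro i
    have hdiag : lam i • (1 : Matrix k k ℝ) + Matrix.diagonal lam
        = Matrix.diagonal (fun j => lam i + lam j) := by
      rw [smul_one_eq_diagonal, Matrix.diagonal_add]
    rw [hdiag]
    apply Matrix.inv_eq_right_inv
    rw [Matrix.diagonal_mul_diagonal,
      show (fun j => (lam i + lam j) * (lam i + lam j)⁻¹) = fun _ => (1:ℝ) from
        funext fun j => mul_inv_cancel₀ (hne i j), Matrix.diagonal_one]
  have hYtW : Qᵀ * (Y * M) = Yt * (Qᵀ * M) := by
    rw [hYt, Matrix.mul_assoc (Qᵀ * Y) Q (Qᵀ * M), ← Matrix.mul_assoc Q Qᵀ M, hQQ,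
      Matrix.one_mul, Matrix.mul_assoc]
  -- the RHS matrix entries equal minus (Qᵀ Y M) entries
  have hentry : ∀ i l, (S * (lam i • (1 : Matrix k k ℝ) + Matrix.diagonal lam)⁻¹ * (Qᵀ * M)) i l
      = -((Qᵀ * (Y * M)) i l) := by
    intro i l
    rw [hinv i, hYtW]
    rw [Matrix.mul_apply (M := S * Matrix.diagonal fun j => (lam i + lam j)⁻¹) (N := Qᵀ * M),
      Matrix.mul_apply (M := Yt) (N := Qᵀ * M)]
    simp only [Matrix.mul_diagonal]
    rw [← Finset.sum_neg_distrib]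
    apply Finset.sum_congr rfl
    intro j _
    rw [hYte i j, div_eq_mul_inv]
    ring
  -- Frobenius norm via trace
  have frob : ∀ (A : Matrix k s ℝ), ∑ i, ∑ l, (A i l) ^ 2 = Matrix.trace (Aᵀ * A) := by
    intro A
    rw [Matrix.trace]
    simp only [Matrix.diag, Matrix.mul_apply, Matrix.transpose_apply]
    rw [Finset.sum_comm]
    simp [sq]
  have hsq : ∑ i, ∑ l,
      ((S * (lam i • (1 : Matrix k k ℝ) + Matrix.diagonal lam)⁻¹ * (Qᵀ * M)) i l) ^ 2
      = ∑ i, ∑ l, ((Qᵀ * (Y * M)) i l) ^ 2 := by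
    apply Finset.sum_congr rfl
    intro i _
    apply Finset.sum_congr rfl
    intro l _
    rw [hentry i l, neg_pow]
    simp
  rw [hsq, frob (Qᵀ * (Y * M)),
    show (Qᵀ * (Y * M))ᵀ * (Qᵀ * (Y * M)) = (Y * M)ᵀ * (Y * M) from by
      rw [Matrix.transpose_mul, Matrix.transpose_transpose, Matrix.mul_assoc,
        ← Matrix.mul_assoc Q Qᵀ, hQQ, Matrix.one_mul],
    frob (Y * M)]
end

section
/- Let A be symmetric, V_{m+1} = [V_m, 𝒱_{m+1}] ∈ ℝ^{n×(k+s)} have orthonormal columns with A V_m = V_{m+1} \underline{T}_m where \underline{T}_m = V_{m+1}ᵀ A V_m, and suppose C = V_m E_1 γ (i.e., VᵀC recovers E_1γ) and Y solves T_m Y + Y T_m + E_1 γγᵀ E_1ᵀ = 0 with T_m = V_mᵀ A V_m. Then the residual R = A V_m Y V_mᵀ + V_m Y V_mᵀ A + CCᵀ satisfies ‖R‖_F = √2 ‖Y E_m τᵀ‖_F, where τ = 𝒱_{m+1}ᵀ A 𝒱_m E_m (the last block row of \underline{T}_m) and E_m selects the last s columns. -/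
open Matrix

/-- The Frobenius norm of a real matrix. -/
noncomputable def frobNorm {m n : Type*} [Fintype m] [Fintype n] (Q : Matrix m n ℝ) : ℝ :=
  Real.sqrt (∑ i, ∑ j, (Q i j) ^ 2)

/-- `blockE m s p` is the `p`-th block of `s` columns of the identity matrix of
size `(m+1)s`, with rows indexed by `Fin (m+1) × Fin s`. -/
def blockE (m s : ℕ) (p : Fin (m + 1)) : Matrix (Fin (m + 1) × Fin s) (Fin s) ℝ :=
  Matrix.of fun ij l => if ij = (p, l) then 1 else 0

lemma frob_trace {m n : Type*} [Fintype m] [Fintype n] (Q : Matrix m n ℝ) :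
    frobNorm Q = Real.sqrt (Qᵀ * Q).trace := by
  unfold frobNorm
  congr 1
  rw [Matrix.trace]
  simp only [Matrix.diag, Matrix.mul_apply, Matrix.transpose_apply, sq]
  rw [Finset.sum_comm]

lemma trace_nonneg_tQ {m n : Type*} [Fintype m] [Fintype n] (Q : Matrix m n ℝ) :
    0 ≤ (Qᵀ * Q).trace := by
  rw [Matrix.trace]
  refine Finset.sum_nonneg fun j _ => ?_
  simp only [Matrix.diag, Matrix.mul_apply, Matrix.transpose_apply]
  exact Finset.sum_nonneg fun i _ => mul_self_nonneg _

theorem lyapunov_residual_norm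
    {n : Type*} [Fintype n] (m s : ℕ)
    (A : Matrix n n ℝ) (V : Matrix n (Fin (m + 1) × Fin s) ℝ)
    (Vnew : Matrix n (Fin s) ℝ) (C : Matrix n (Fin s) ℝ)
    (γ τ : Matrix (Fin s) (Fin s) ℝ)
    (T Y : Matrix (Fin (m + 1) × Fin s) (Fin (m + 1) × Fin s) ℝ)
    (hA : A.IsSymm)
    (hV : Vᵀ * V = 1) (hVnew : Vnewᵀ * Vnew = 1) (horth : Vᵀ * Vnew = 0)
    (hT : T = Vᵀ * A * V)
    (hrel : A * V = V * T + Vnew * τ * (blockE m s (Fin.last m))ᵀ)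
    (hC : C = V * blockE m s 0 * γ)
    (hYs : Y.IsSymm)
    (hY : T * Y + Y * T + blockE m s 0 * γ * γᵀ * (blockE m s 0)ᵀ = 0) :
    frobNorm (A * (V * Y * Vᵀ) + (V * Y * Vᵀ) * A + C * Cᵀ) =
      Real.sqrt 2 * frobNorm (Y * blockE m s (Fin.last m) * τᵀ) := by
  set E := blockE m s (Fin.last m) with hE
  set E₁ := blockE m s 0 with hE1
  set S := Y * E * τᵀ with hS
  have hAe : Aᵀ = A := hA
  have hYe : Yᵀ = Y := hYs
  have hTsymm : Tᵀ = T := by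
    rw [hT]
    simp [Matrix.transpose_mul, hAe, Matrix.mul_assoc]
  have hSt : Sᵀ = τ * Eᵀ * Y := by
    rw [hS]
    simp [Matrix.transpose_mul, hYe, Matrix.mul_assoc]
  -- orthogonality helpers
  have c1 : ∀ (X : Matrix (Fin s) n ℝ),
      Vnewᵀ * (Vnew * X) = X := by
    intro X; rw [← Matrix.mul_assoc, hVnew, Matrix.one_mul]
  have c2 : ∀ (X : Matrix (Fin (m+1) × Fin s) n ℝ),
      Vᵀ * (V * X) = X := by
    intro X; rw [← Matrix.mul_assoc, hV, Matrix.one_mul]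
  have horth' : Vnewᵀ * V = 0 := by
    have := congrArg Matrix.transpose horth
    simpa using this
  have c3 : ∀ (X : Matrix (Fin s) n ℝ),
      Vᵀ * (Vnew * X) = 0 := by
    intro X; rw [← Matrix.mul_assoc, horth, Matrix.zero_mul]
  have c4 : ∀ (X : Matrix (Fin (m+1) × Fin s) n ℝ),
      Vnewᵀ * (V * X) = 0 := by
    intro X; rw [← Matrix.mul_assoc, horth', Matrix.zero_mul]
  have hVA : Vᵀ * A = T * Vᵀ + E * (τᵀ * Vnewᵀ) := by
    have := congrArg Matrix.transpose hrel
    simp only [Matrix.transpose_mul, Matrix.transpose_add, hAe,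
      Matrix.transpose_transpose, hTsymm] at this
    exact this
  have h1 : A * (V * Y * Vᵀ) = V * (T * Y) * Vᵀ + Vnew * Sᵀ * Vᵀ := by
    calc A * (V * Y * Vᵀ) = (A * V) * (Y * Vᵀ) := by
          simp [Matrix.mul_assoc]
      _ = _ := by
          rw [hrel, hSt]
          simp [Matrix.add_mul, Matrix.mul_assoc]
  have h2 : (V * Y * Vᵀ) * A = V * (Y * T) * Vᵀ + V * S * Vnewᵀ := by
    calc (V * Y * Vᵀ) * A = (V * Y) * (Vᵀ * A) := by
          simp [Matrix.mul_assoc]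
      _ = _ := by
          rw [hVA, hS]
          simp [Matrix.mul_add, Matrix.mul_assoc]
  have h3 : C * Cᵀ = V * (E₁ * γ * γᵀ * E₁ᵀ) * Vᵀ := by
    rw [hC]
    simp [Matrix.transpose_mul, Matrix.mul_assoc]
  have hzero : V * (T * Y) * Vᵀ + V * (Y * T) * Vᵀ + V * (E₁ * γ * γᵀ * E₁ᵀ) * Vᵀ = 0 := by
    have h := congrArg (fun X => V * X * Vᵀ) hY
    simpa [Matrix.mul_add, Matrix.add_mul] using h
  have hR : A * (V * Y * Vᵀ) + (V * Y * Vᵀ) * A + C * Cᵀ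
      = Vnew * Sᵀ * Vᵀ + V * S * Vnewᵀ := by
    rw [h1, h2, h3]
    calc (V * (T * Y) * Vᵀ + Vnew * Sᵀ * Vᵀ) + (V * (Y * T) * Vᵀ + V * S * Vnewᵀ)
          + V * (E₁ * γ * γᵀ * E₁ᵀ) * Vᵀ
        = (V * (T * Y) * Vᵀ + V * (Y * T) * Vᵀ + V * (E₁ * γ * γᵀ * E₁ᵀ) * Vᵀ)
          + (Vnew * Sᵀ * Vᵀ + V * S * Vnewᵀ) := by abel
      _ = Vnew * Sᵀ * Vᵀ + V * S * Vnewᵀ := by rw [hzero, zero_add]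
  set R := Vnew * Sᵀ * Vᵀ + V * S * Vnewᵀ with hRdef
  have hRtR : Rᵀ * R = V * (S * Sᵀ) * Vᵀ + Vnew * (Sᵀ * S) * Vnewᵀ := by
    rw [hRdef]
    simp only [Matrix.transpose_add, Matrix.transpose_mul, Matrix.transpose_transpose,
      Matrix.add_mul, Matrix.mul_add, Matrix.mul_assoc, c1, c2, c3, c4,
      Matrix.mul_zero, add_zero, zero_add]
  have htrace : (Rᵀ * R).trace = 2 * ((Sᵀ * S).trace) := by
    rw [hRtR, Matrix.trace_add]
    have t1 : (V * (S * Sᵀ) * Vᵀ).trace = (Sᵀ * S).trace := by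
      rw [Matrix.trace_mul_cycle, ← Matrix.mul_assoc, hV, Matrix.one_mul,
        Matrix.trace_mul_comm]
    have t2 : (Vnew * (Sᵀ * S) * Vnewᵀ).trace = (Sᵀ * S).trace := by
      rw [Matrix.trace_mul_cycle, ← Matrix.mul_assoc, hVnew, Matrix.one_mul]
    rw [t1, t2]; ring
  rw [hR, frob_trace, frob_trace, htrace,
    Real.sqrt_mul (by norm_num : (0:ℝ) ≤ 2)]
end

section
/- Under the Sylvester Galerkin setting, with Lanczos relations A V_m = V_m T_m + 𝒱_{m+1} τ E_mᵀ and B U_m = U_m J_m + 𝒰_{m+1} ι E_mᵀ (both bases with orthonormal columns including the new block), C₁ = V_m E_1 γ₁, C₂ = U_m E_1 γ₂, and Y solving T_m Y + Y J_m + E_1 γ₁γ₂ᵀ E_1ᵀ = 0, the residual R = A V_m Y U_mᵀ + V_m Y U_mᵀ B + C₁C₂ᵀ satisfies ‖R‖_F² = ‖τ E_mᵀ Y‖_F² + ‖Y E_m ιᵀ‖_F². -/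
open Matrix

private lemma sum_sq_eq_trace {α β : Type*} [Fintype α] [Fintype β] (M : Matrix α β ℝ) :
    (∑ i, ∑ j, (M i j) ^ 2) = (Mᵀ * M).trace := by
  simp only [Matrix.trace, Matrix.diag, Matrix.mul_apply, Matrix.transpose_apply]
  rw [Finset.sum_comm]
  simp [sq]

theorem sylvester_residual_norm
    {n1 n2 : Type*} [Fintype n1] [Fintype n2] (m s : ℕ)
    (A : Matrix n1 n1 ℝ) (B : Matrix n2 n2 ℝ)
    (V : Matrix n1 (Fin (m + 1) × Fin s) ℝ) (Vnew : Matrix n1 (Fin s) ℝ)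
    (U : Matrix n2 (Fin (m + 1) × Fin s) ℝ) (Unew : Matrix n2 (Fin s) ℝ)
    (C₁ : Matrix n1 (Fin s) ℝ) (C₂ : Matrix n2 (Fin s) ℝ)
    (γ₁ γ₂ τ ι : Matrix (Fin s) (Fin s) ℝ)
    (T J Y : Matrix (Fin (m + 1) × Fin s) (Fin (m + 1) × Fin s) ℝ)
    (hA : A.IsSymm) (hB : B.IsSymm)
    (hV : Vᵀ * V = 1) (hVnew : Vnewᵀ * Vnew = 1) (horthV : Vᵀ * Vnew = 0)
    (hU : Uᵀ * U = 1) (hUnew : Unewᵀ * Unew = 1) (horthU : Uᵀ * Unew = 0)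
    (hT : T = Vᵀ * A * V) (hJ : J = Uᵀ * B * U)
    (hrelA : A * V = V * T + Vnew * τ * (blockE m s (Fin.last m))ᵀ)
    (hrelB : B * U = U * J + Unew * ι * (blockE m s (Fin.last m))ᵀ)
    (hC₁ : C₁ = V * blockE m s 0 * γ₁) (hC₂ : C₂ = U * blockE m s 0 * γ₂)
    (hY : T * Y + Y * J + blockE m s 0 * γ₁ * γ₂ᵀ * (blockE m s 0)ᵀ = 0) :
    (∑ i, ∑ j, ((A * (V * Y * Uᵀ) + (V * Y * Uᵀ) * B + C₁ * C₂ᵀ) i j) ^ 2) =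
      (∑ i, ∑ j, ((τ * (blockE m s (Fin.last m))ᵀ * Y) i j) ^ 2) +
      (∑ i, ∑ j, ((Y * blockE m s (Fin.last m) * ιᵀ) i j) ^ 2) := by
  set E := blockE m s (Fin.last m) with hE
  set E1 := blockE m s 0 with hE1
  set X := τ * Eᵀ * Y with hX
  set Z := Y * E * ιᵀ with hZ
  have hJs : Jᵀ = J := by
    rw [hJ, Matrix.transpose_mul, Matrix.transpose_mul, Matrix.transpose_transpose,
      hB.eq, Matrix.mul_assoc]
  -- Step 1: rewrite the residual
  have hR : A * (V * Y * Uᵀ) + (V * Y * Uᵀ) * B + C₁ * C₂ᵀ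
      = Vnew * X * Uᵀ + V * Z * Unewᵀ := by
    have h1 : A * (V * Y * Uᵀ) = V * (T * Y) * Uᵀ + Vnew * X * Uᵀ := by
      rw [show A * (V * Y * Uᵀ) = (A * V) * Y * Uᵀ by
        simp [Matrix.mul_assoc], hrelA]
      simp [Matrix.add_mul, Matrix.mul_assoc, hX]
    have hUB : Uᵀ * B = J * Uᵀ + E * ιᵀ * Unewᵀ := by
      have : (B * U)ᵀ = (U * J + Unew * ι * Eᵀ)ᵀ := by rw [hrelB]
      simpa [Matrix.transpose_mul, Matrix.transpose_add, hB.eq, hJs,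
        Matrix.mul_assoc] using this
    have h2 : (V * Y * Uᵀ) * B = V * (Y * J) * Uᵀ + V * Z * Unewᵀ := by
      rw [Matrix.mul_assoc, Matrix.mul_assoc, hUB]
      simp [Matrix.mul_add, Matrix.mul_assoc, hZ]
    have h3 : C₁ * C₂ᵀ = V * (E1 * γ₁ * γ₂ᵀ * E1ᵀ) * Uᵀ := by
      rw [hC₁, hC₂]
      simp [Matrix.transpose_mul, Matrix.mul_assoc]
    have key : V * (T * Y) * Uᵀ + V * (Y * J) * Uᵀ + V * (E1 * γ₁ * γ₂ᵀ * E1ᵀ) * Uᵀ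
        + (Vnew * X * Uᵀ + V * Z * Unewᵀ)
        = V * (T * Y + Y * J + E1 * γ₁ * γ₂ᵀ * E1ᵀ) * Uᵀ + (Vnew * X * Uᵀ + V * Z * Unewᵀ) := by
      simp only [Matrix.mul_add, Matrix.add_mul]
    rw [h1, h2, h3]
    calc V * (T * Y) * Uᵀ + Vnew * X * Uᵀ + (V * (Y * J) * Uᵀ + V * Z * Unewᵀ)
          + V * (E1 * γ₁ * γ₂ᵀ * E1ᵀ) * Uᵀ
        = V * (T * Y) * Uᵀ + V * (Y * J) * Uᵀ + V * (E1 * γ₁ * γ₂ᵀ * E1ᵀ) * Uᵀ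
          + (Vnew * X * Uᵀ + V * Z * Unewᵀ) := by abel
      _ = V * (T * Y + Y * J + E1 * γ₁ * γ₂ᵀ * E1ᵀ) * Uᵀ + (Vnew * X * Uᵀ + V * Z * Unewᵀ) := key
      _ = Vnew * X * Uᵀ + V * Z * Unewᵀ := by rw [hY]; simp
  rw [hR, sum_sq_eq_trace, sum_sq_eq_trace, sum_sq_eq_trace]
  have hVnV : Vnewᵀ * V = 0 := by
    have := congrArg Matrix.transpose horthV
    simpa [Matrix.transpose_mul] using this
  have hUnU : Unewᵀ * U = 0 := by
    have := congrArg Matrix.transpose horthU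
    simpa [Matrix.transpose_mul] using this
  have expand : (Vnew * X * Uᵀ + V * Z * Unewᵀ)ᵀ * (Vnew * X * Uᵀ + V * Z * Unewᵀ)
      = U * (Xᵀ * X) * Uᵀ + Unew * (Zᵀ * Z) * Unewᵀ := by
    simp only [Matrix.transpose_add, Matrix.transpose_mul, Matrix.transpose_transpose,
      Matrix.add_mul, Matrix.mul_add]
    have e1 : U * (Xᵀ * Vnewᵀ) * (Vnew * X * Uᵀ) = U * (Xᵀ * X) * Uᵀ := by
      rw [show U * (Xᵀ * Vnewᵀ) * (Vnew * X * Uᵀ)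
          = U * Xᵀ * (Vnewᵀ * Vnew) * X * Uᵀ by simp [Matrix.mul_assoc], hVnew]
      simp [Matrix.mul_assoc]
    have e2 : U * (Xᵀ * Vnewᵀ) * (V * Z * Unewᵀ) = 0 := by
      rw [show U * (Xᵀ * Vnewᵀ) * (V * Z * Unewᵀ)
          = U * Xᵀ * (Vnewᵀ * V) * Z * Unewᵀ by simp [Matrix.mul_assoc], hVnV]
      simp
    have e3 : Unew * (Zᵀ * Vᵀ) * (Vnew * X * Uᵀ) = 0 := by
      rw [show Unew * (Zᵀ * Vᵀ) * (Vnew * X * Uᵀ)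
          = Unew * Zᵀ * (Vᵀ * Vnew) * X * Uᵀ by simp [Matrix.mul_assoc], horthV]
      simp
    have e4 : Unew * (Zᵀ * Vᵀ) * (V * Z * Unewᵀ) = Unew * (Zᵀ * Z) * Unewᵀ := by
      rw [show Unew * (Zᵀ * Vᵀ) * (V * Z * Unewᵀ)
          = Unew * Zᵀ * (Vᵀ * V) * Z * Unewᵀ by simp [Matrix.mul_assoc], hV]
      simp [Matrix.mul_assoc]
    rw [e1, e2, e3, e4]
    abel
  rw [expand, Matrix.trace_add]
  have t1 : (U * (Xᵀ * X) * Uᵀ).trace = (Xᵀ * X).trace := by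
    rw [Matrix.trace_mul_cycle, ← Matrix.mul_assoc, hU, Matrix.one_mul]
  have t2 : (Unew * (Zᵀ * Z) * Unewᵀ).trace = (Zᵀ * Z).trace := by
    rw [Matrix.trace_mul_cycle, ← Matrix.mul_assoc, hUnew, Matrix.one_mul]
  rw [t1, t2]
end
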